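/- Let G be obtained from a 5-cycle with vertices u, v, x, y, z (in cyclic order uv xyz, with uv an edge maximizing degree-sum on the cycle) by attaching at least 2 pendant edges at every cycle vertex. If d(u) + d(v) ≥ d(x) + d(y) + d(z) − 3, then the strong chromatic index of G equals d(u) + d(v) − 1. -/

import Mathlib

open SimpleGraph

/-- Two edges of `G` are within distance at most 2: they share a vertex, or some edge of `G`
joins an endpoint of one to an endpoint of the other. -/
def EdgesNear {V : Type*} (G : SimpleGraph V) (e f : Sym2 V) : Prop :=
  (∃ x, x ∈ e ∧ x ∈ f) ∨ (∃ x y, x ∈ e ∧ y ∈ f ∧ G.Adj x y)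

/-- `c` assigns distinct colours to any two distinct edges of `G` at distance at most 2. -/
def IsStrongEdgeColoringOn {V : Type*} (G : SimpleGraph V) (c : Sym2 V → ℕ) : Prop :=
  ∀ e ∈ G.edgeSet, ∀ f ∈ G.edgeSet, e ≠ f → EdgesNear G e f → c e ≠ c f

/-- A strong edge-colouring of `G` with `k` colours. -/
def IsStrongEdgeColoring {V : Type*} (G : SimpleGraph V) (k : ℕ) (c : Sym2 V → ℕ) : Prop :=
  (∀ e ∈ G.edgeSet, c e < k) ∧ IsStrongEdgeColoringOn G c

/-- The strong chromatic index of `G`. -/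
noncomputable def sci {V : Type*} (G : SimpleGraph V) : ℕ :=
  sInf {k | ∃ c : Sym2 V → ℕ, IsStrongEdgeColoring G k c}

/-- Degree of a vertex (cardinality of its neighbour set). -/
noncomputable def sdeg {V : Type*} (G : SimpleGraph V) (v : V) : ℕ :=
  (G.neighborSet v).ncard

/-- The graph obtained from the cycle `C_n` (on vertices `Sum.inl i`, `i : Fin n`)
by attaching `p i` pendant edges at the cycle vertex `i` (the pendant neighbours of `i`
are the vertices `Sum.inr ⟨i, x⟩`). -/
def pufferGraph (n : ℕ) (p : Fin n → ℕ) :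
    SimpleGraph (Fin n ⊕ Σ i : Fin n, Fin (p i)) :=
  SimpleGraph.fromRel (fun a b =>
    (∃ i j : Fin n, a = Sum.inl i ∧ b = Sum.inl j ∧ (SimpleGraph.cycleGraph n).Adj i j) ∨
    (∃ (i : Fin n) (x : Fin (p i)), a = Sum.inl i ∧ b = Sum.inr ⟨i, x⟩))

open Classical in
/-- The maximum of `d(u) + d(v)` over the edges `uv` of the cycle of `pufferGraph n p`. -/
noncomputable def maxCycleDegSum (n : ℕ) (p : Fin n → ℕ) : ℕ :=
  Finset.univ.sup fun q : Fin n × Fin n =>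
    if (SimpleGraph.cycleGraph n).Adj q.1 q.2 then
      sdeg (pufferGraph n p) (Sum.inl q.1) + sdeg (pufferGraph n p) (Sum.inl q.2)
    else 0

/-!
The edges at `u` or `v` are pairwise within distance 2 and there are `d(u) + d(v) - 1` of them,
which gives the lower bound. For the matching colouring, the five cycle edges take colours
`0, …, 4` and each cycle vertex `j` passes the colour of the opposite cycle edge to one of its
pendant edges; the other pendant edges share the colours `≥ 5` in blocks, non-adjacent cycle
vertices reusing the same block. The vertex `y` opposite `uv` is squeezed between the blocks of
its neighbours, and `d(u) + d(v) ≥ d(x) + d(y) + d(z) - 3` is what leaves room for it.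
-/

lemma EdgesNear.symm {V : Type*} {G : SimpleGraph V} {e f : Sym2 V} (h : EdgesNear G e f) :
    EdgesNear G f e := by
  rcases h with ⟨x, hxe, hxf⟩ | ⟨x, y, hxe, hyf, hxy⟩
  exacts [Or.inl ⟨x, hxf, hxe⟩, Or.inr ⟨y, x, hyf, hxe, hxy.symm⟩]

lemma sdeg_eq_ncard_incidenceSet {V : Type*} (G : SimpleGraph V) (v : V) :
    sdeg G v = (G.incidenceSet v).ncard := by
  classical exact (Set.ncard_congr' (G.incidenceSetEquivNeighborSet v)).symm

lemma IsStrongEdgeColoring.sdeg_add_sdeg_sub_one_le {V : Type*} [Finite V] {G : SimpleGraph V}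
    {k : ℕ} {c : Sym2 V → ℕ} (hc : IsStrongEdgeColoring G k c) {u v : V} (huv : G.Adj u v) :
    sdeg G u + sdeg G v - 1 ≤ k := by
  classical
  have hcard := Set.ncard_union_add_ncard_inter (G.incidenceSet u) (G.incidenceSet v)
  rw [G.incidenceSet_inter_incidenceSet_of_adj huv, Set.ncard_singleton,
    ← sdeg_eq_ncard_incidenceSet, ← sdeg_eq_ncard_incidenceSet] at hcard
  set S := G.incidenceSet u ∪ G.incidenceSet v
  have hS : S ⊆ G.edgeSet := Set.union_subset (G.incidenceSet_subset u) (G.incidenceSet_subset v)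
  have hnear : ∀ e ∈ S, ∀ f ∈ S, EdgesNear G e f := by
    rintro e (⟨-, hue⟩ | ⟨-, hve⟩) f (⟨-, huf⟩ | ⟨-, hvf⟩)
    exacts [Or.inl ⟨u, hue, huf⟩, Or.inr ⟨u, v, hue, hvf, huv⟩,
      Or.inr ⟨v, u, hve, huf, huv.symm⟩, Or.inl ⟨v, hve, hvf⟩]
  calc sdeg G u + sdeg G v - 1 = S.ncard := by omega
    _ ≤ (Set.Iio k).ncard :=
      Set.ncard_le_ncard_of_injOn c (fun e he => hc.1 e (hS he)) fun e he f hf hef =>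
        by_contra fun hne => hc.2 e (hS he) f (hS hf) hne (hnear e he f hf) hef
    _ = k := by simp

lemma sci_eq_of_isStrongEdgeColoring {V : Type*} {G : SimpleGraph V} {k : ℕ} {c : Sym2 V → ℕ}
    (hc : IsStrongEdgeColoring G k c)
    (hmin : ∀ m c', IsStrongEdgeColoring G m c' → k ≤ m) : sci G = k :=
  le_antisymm (Nat.sInf_le ⟨c, hc⟩) (le_csInf ⟨k, c, hc⟩ fun m ⟨c', hc'⟩ => hmin m c' hc')

namespace pufferGraph

variable {n : ℕ} {p : Fin n → ℕ}

lemma adj_inl_inl {i j : Fin n} :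
    (pufferGraph n p).Adj (.inl i) (.inl j) ↔ (cycleGraph n).Adj i j := by
  simp [pufferGraph, fromRel_adj]
  exact ⟨fun h => h.2.elim id (·.symm), fun h => ⟨h.ne, Or.inl h⟩⟩

lemma adj_inl_inr {i : Fin n} {s : Σ i : Fin n, Fin (p i)} :
    (pufferGraph n p).Adj (.inl i) (.inr s) ↔ s.1 = i := by
  obtain ⟨j, x⟩ := s
  simp [pufferGraph, fromRel_adj, eq_comm]
  rintro rfl
  exact ⟨x, .rfl⟩

lemma not_adj_inr_inr {s t : Σ i : Fin n, Fin (p i)} :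
    ¬ (pufferGraph n p).Adj (.inr s) (.inr t) := by
  simp [pufferGraph, fromRel_adj]

def anchor : Fin n ⊕ (Σ i : Fin n, Fin (p i)) → Fin n := Sum.elim id Sigma.fst

lemma anchor_eq_or_adj_of_adj {a b : Fin n ⊕ (Σ i : Fin n, Fin (p i))}
    (h : (pufferGraph n p).Adj a b) :
    anchor a = anchor b ∨ (cycleGraph n).Adj (anchor a) (anchor b) := by
  rcases a with i | s <;> rcases b with j | t
  · exact .inr (adj_inl_inl.mp h)
  · exact .inl (adj_inl_inr.mp h).symm
  · exact .inl (adj_inl_inr.mp h.symm)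
  · exact absurd h not_adj_inr_inr

lemma _root_.EdgesNear.exists_anchor {e f : Sym2 (Fin n ⊕ (Σ i : Fin n, Fin (p i)))}
    (h : EdgesNear (pufferGraph n p) e f) :
    ∃ a ∈ e, ∃ b ∈ f, anchor a = anchor b ∨ (cycleGraph n).Adj (anchor a) (anchor b) := by
  rcases h with ⟨a, hae, haf⟩ | ⟨a, b, hae, hbf, hab⟩
  exacts [⟨a, hae, a, haf, .inl rfl⟩, ⟨a, hae, b, hbf, anchor_eq_or_adj_of_adj hab⟩]

lemma anchor_of_mem_pendant {j : Fin n} {x : Fin (p j)} {a : Fin n ⊕ (Σ i : Fin n, Fin (p i))}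
    (ha : a ∈ s(.inl j, .inr ⟨j, x⟩)) : anchor a = j := by
  rcases Sym2.mem_iff.mp ha with rfl | rfl <;> rfl

lemma anchor_of_mem_cycle {i j : Fin n} {a : Fin n ⊕ (Σ i : Fin n, Fin (p i))}
    (ha : a ∈ s(.inl i, .inl j)) : anchor a = i ∨ anchor a = j := by
  rcases Sym2.mem_iff.mp ha with rfl | rfl
  exacts [.inl rfl, .inr rfl]

lemma edge_cases {e : Sym2 (Fin n ⊕ (Σ i : Fin n, Fin (p i)))}
    (he : e ∈ (pufferGraph n p).edgeSet) :
    (∃ i j, (cycleGraph n).Adj i j ∧ e = s(.inl i, .inl j)) ∨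
      ∃ j x, e = s(.inl j, .inr ⟨j, x⟩) := by
  induction e using Sym2.ind with
  | _ a b =>
  rcases a with i | ⟨j, x⟩ <;> rcases b with j' | ⟨j', x'⟩
  · exact .inl ⟨i, j', adj_inl_inl.mp he, rfl⟩
  · obtain rfl : j' = i := adj_inl_inr.mp he
    exact .inr ⟨j', x', rfl⟩
  · obtain rfl : j = j' := adj_inl_inr.mp he.symm
    exact .inr ⟨j, x, Sym2.eq_swap⟩
  · exact absurd he not_adj_inr_inr

lemma sdeg_inl {n : ℕ} (p : Fin (n + 3) → ℕ) (i : Fin (n + 3)) :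
    sdeg (pufferGraph (n + 3) p) (.inl i) = p i + 2 := by
  have hnbr : (pufferGraph (n + 3) p).neighborSet (.inl i) =
      Sum.inl '' (cycleGraph (n + 3)).neighborSet i ∪ Set.range fun x => .inr ⟨i, x⟩ := by
    ext (j | ⟨j, x⟩)
    · simp [adj_inl_inl]
    · simp [adj_inl_inr, eq_comm]
      rintro rfl
      exact ⟨x, .rfl⟩
  have hcycle : ((cycleGraph (n + 3)).neighborSet i).ncard = 2 := by
    rw [← Nat.card_coe_set_eq, Nat.card_eq_fintype_card, card_neighborSet_eq_degree,
      cycleGraph_degree_three_le]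
  rw [sdeg, hnbr, Set.ncard_union_eq, Set.ncard_image_of_injective _ Sum.inl_injective, hcycle,
    Set.ncard_range_of_injective, Nat.card_fin, add_comm]
  · exact fun x y h => by simpa using h
  · exact Set.disjoint_left.mpr <| by rintro _ ⟨j, -, rfl⟩ ⟨x, ⟨⟩⟩

end pufferGraph

lemma cycleGraph_five_adj_iff {i j : Fin 5} : (cycleGraph 5).Adj i j ↔ j = i + 1 ∨ i = j + 1 := by
  revert i j; decide

lemma cycleGraph_five_sym2_eq_of_add_eq {i j i' j' : Fin 5} (h : (cycleGraph 5).Adj i j)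
    (h' : (cycleGraph 5).Adj i' j') (hsum : i + j = i' + j') : s(i, j) = s(i', j') := by
  revert i j i' j'; decide

lemma cycleGraph_five_far_of_add_eq {i j k a : Fin 5} (h : (cycleGraph 5).Adj i j)
    (hsum : i + j = 2 * k) (ha : a = i ∨ a = j) : ¬(a = k ∨ (cycleGraph 5).Adj a k) := by
  revert i j k a; decide

section FiveCycle

variable (p : Fin 5 → ℕ)

def pufferColoringFun (c : Fin 5 → ℕ → ℕ) :
    Fin 5 ⊕ (Σ i : Fin 5, Fin (p i)) → Fin 5 ⊕ (Σ i : Fin 5, Fin (p i)) → ℕ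
  | .inl a, .inl b => (a + b).val
  | .inl _, .inr s | .inr s, .inl _ => c s.1 s.2
  | .inr _, .inr _ => 0

/-- The cycle edge `ab` gets colour `a + b`, so the cycle edge `{j + 2, j + 3}`, the only one
far from the pendant edges at `j`, has colour `2 * j`. -/
def pufferColoring (c : Fin 5 → ℕ → ℕ) : Sym2 (Fin 5 ⊕ (Σ i : Fin 5, Fin (p i))) → ℕ :=
  Sym2.lift ⟨pufferColoringFun p c, by
    rintro (a | _) (b | _) <;> simp only [pufferColoringFun, add_comm]⟩

variable {p}

lemma pufferColoring_cycle_ne_pendant (c : Fin 5 → ℕ → ℕ)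
    (hsmall : ∀ j y, c j y < 5 → c j y = (2 * j).val) {i j k : Fin 5} {x : Fin (p k)}
    (hij : (cycleGraph 5).Adj i j)
    (hnear : EdgesNear (pufferGraph 5 p) s(.inl i, .inl j) s(.inl k, .inr ⟨k, x⟩)) :
    pufferColoring p c s(.inl i, .inl j) ≠ pufferColoring p c s(.inl k, .inr ⟨k, x⟩) := by
  intro hcol
  change (i + j).val = c k x at hcol
  have hsum : i + j = 2 * k := Fin.ext (hcol.trans (hsmall k x (hcol ▸ (i + j).isLt)))
  obtain ⟨a, ha, b, hb, hab⟩ := hnear.exists_anchor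
  rw [pufferGraph.anchor_of_mem_pendant hb] at hab
  exact cycleGraph_five_far_of_add_eq hij hsum (pufferGraph.anchor_of_mem_cycle ha) hab

theorem isStrongEdgeColoring_pufferColoring {K : ℕ} (c : Fin 5 → ℕ → ℕ) (hK : 5 ≤ K)
    (hlt : ∀ j y, y < p j → c j y < K) (hinj : ∀ j, (c j).Injective)
    (hadj : ∀ j y z, y < p j → z < p (j + 1) → c j y ≠ c (j + 1) z)
    (hsmall : ∀ j y, c j y < 5 → c j y = (2 * j).val) :
    IsStrongEdgeColoring (pufferGraph 5 p) K (pufferColoring p c) := by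
  refine ⟨fun e he => ?_, fun e he f hf hne hnear => ?_⟩
  · rcases pufferGraph.edge_cases he with ⟨i, j, -, rfl⟩ | ⟨j, x, rfl⟩
    · exact (i + j).isLt.trans_le hK
    · exact hlt j x x.isLt
  rcases pufferGraph.edge_cases he with ⟨i, j, hij, rfl⟩ | ⟨j, x, rfl⟩ <;>
    rcases pufferGraph.edge_cases hf with ⟨i', j', hij', rfl⟩ | ⟨j', x', rfl⟩
  · intro hcol
    have hsum : i + j = i' + j' := Fin.ext hcol
    apply hne
    simpa using congrArg (Sym2.map (Sum.inl (β := Σ i : Fin 5, Fin (p i))))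
      (cycleGraph_five_sym2_eq_of_add_eq hij hij' hsum)
  · exact pufferColoring_cycle_ne_pendant c hsmall hij hnear
  · exact (pufferColoring_cycle_ne_pendant c hsmall hij' hnear.symm).symm
  · change c j x ≠ c j' x'
    obtain ⟨a, ha, b, hb, hab⟩ := hnear.exists_anchor
    rw [pufferGraph.anchor_of_mem_pendant ha, pufferGraph.anchor_of_mem_pendant hb,
      cycleGraph_five_adj_iff] at hab
    rcases hab with rfl | rfl | rfl
    · have hxx' : x ≠ x' := by rintro rfl; exact hne rfl
      exact fun h => hxx' (Fin.ext (hinj j h))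
    · exact hadj j x x' x.isLt x'.isLt
    · exact (hadj j' x' x x'.isLt x.isLt).symm

end FiveCycle

/-- In terms of `p i = d(i) - 2`: the cycle edge `uv = 01` is at least as heavy as its neighbours
`12` and `40`, and `d(u) + d(v) ≥ d(x) + d(y) + d(z) - 3`. -/
structure HeavyPendants (p : Fin 5 → ℕ) : Prop where
  two_le : ∀ i, 2 ≤ p i
  le_zero : p 2 ≤ p 0
  le_one : p 4 ≤ p 1
  sum_le : p 2 + p 3 + p 4 ≤ p 0 + p 1 + 1

/-- Colours `≥ 5` for all but one pendant edge at each cycle vertex: `u` and `x` (not adjacent)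
share `[5, p 0 + 4)`, `v` and `z` share `[p 0 + 4, p 0 + p 1 + 3)`, and `y` gets what `x` and `z`
leave free, `[p 2 + 4, p 0 + 4) ∪ [p 0 + p 4 + 3, p 0 + p 1 + 3)`, which is enough by `sum_le`. -/
def pendantBlock (p : Fin 5 → ℕ) : Fin 5 → ℕ → ℕ :=
  ![(· + 5), (· + p 0 + 4), (· + 5),
    fun y => if y < p 0 - p 2 then y + p 2 + 4 else y + p 2 + p 4 + 3, (· + p 0 + 4)]

def pendantColor (p : Fin 5 → ℕ) (j : Fin 5) : ℕ → ℕ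
  | 0 => (2 * j).val
  | y + 1 => pendantBlock p j y

namespace HeavyPendants

variable {p : Fin 5 → ℕ} (hP : HeavyPendants p)
include hP

lemma five_le_pendantBlock (j : Fin 5) (y : ℕ) : 5 ≤ pendantBlock p j y := by
  have := hP.two_le 0; have := hP.two_le 2
  fin_cases j <;>
    simp only [pendantBlock, Fin.reduceFinMk, Fin.zero_eta, Fin.mk_one, Matrix.cons_val] <;>
    (try split_ifs) <;> omega

lemma pendantBlock_strictMono (j : Fin 5) : StrictMono (pendantBlock p j) := by
  intro y z hyz
  have := hP.two_le 4
  fin_cases j <;>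
    simp only [pendantBlock, Fin.reduceFinMk, Fin.zero_eta, Fin.mk_one, Matrix.cons_val] <;>
    (try split_ifs) <;> omega

lemma pendantBlock_lt {j : Fin 5} {y : ℕ} (hy : y + 1 < p j) :
    pendantBlock p j y < p 0 + p 1 + 3 := by
  have := hP.two_le 1; have := hP.le_zero; have := hP.le_one; have := hP.sum_le
  fin_cases j <;>
    simp only [pendantBlock, Fin.reduceFinMk, Fin.zero_eta, Fin.mk_one, Matrix.cons_val] at hy ⊢ <;>
    (try split_ifs) <;> omega

lemma pendantBlock_ne_succ {j : Fin 5} {y z : ℕ} (hy : y + 1 < p j) (hz : z + 1 < p (j + 1)) :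
    pendantBlock p j y ≠ pendantBlock p (j + 1) z := by
  have := hP.le_zero; have := hP.two_le 4
  fin_cases j <;>
    simp only [pendantBlock, Fin.reduceFinMk, Fin.zero_eta, Fin.mk_one, Fin.reduceAdd,
      Matrix.cons_val] at hy hz ⊢ <;>
    (try split_ifs) <;> omega

lemma pendantColor_injective (j : Fin 5) : (pendantColor p j).Injective := by
  rintro (_ | y) (_ | z) h
  · rfl
  · exact absurd h ((2 * j).isLt.trans_le (hP.five_le_pendantBlock j z)).ne
  · exact absurd h ((2 * j).isLt.trans_le (hP.five_le_pendantBlock j y)).ne'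
  · exact congrArg _ ((hP.pendantBlock_strictMono j).injective h)

lemma pendantColor_lt {j : Fin 5} {y : ℕ} (hy : y < p j) :
    pendantColor p j y < p 0 + p 1 + 3 := by
  rcases y with _ | y
  · have := hP.two_le 0; have := hP.two_le 1
    exact (2 * j).isLt.trans_le (by omega)
  · exact hP.pendantBlock_lt hy

lemma pendantColor_ne_succ {j : Fin 5} {y z : ℕ} (hy : y < p j) (hz : z < p (j + 1)) :
    pendantColor p j y ≠ pendantColor p (j + 1) z := by
  rcases y with _ | y <;> rcases z with _ | z
  · exact (by decide : ∀ j : Fin 5, (2 * j).val ≠ (2 * (j + 1)).val) j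
  · exact ((2 * j).isLt.trans_le (hP.five_le_pendantBlock _ z)).ne
  · exact ((2 * (j + 1)).isLt.trans_le (hP.five_le_pendantBlock j y)).ne'
  · exact hP.pendantBlock_ne_succ hy hz

lemma pendantColor_of_lt_five {j : Fin 5} {y : ℕ} (hy : pendantColor p j y < 5) :
    pendantColor p j y = (2 * j).val := by
  rcases y with _ | y
  · rfl
  · exact absurd hy (hP.five_le_pendantBlock j y).not_gt

theorem isStrongEdgeColoring_pufferColoring :
    IsStrongEdgeColoring (pufferGraph 5 p) (p 0 + p 1 + 3) (pufferColoring p (pendantColor p)) :=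
  _root_.isStrongEdgeColoring_pufferColoring _ (by have := hP.two_le 0; have := hP.two_le 1; omega)
    (fun _ _ hy => hP.pendantColor_lt hy) hP.pendantColor_injective
    (fun _ _ _ hy hz => hP.pendantColor_ne_succ hy hz) fun _ _ hy => hP.pendantColor_of_lt_five hy

end HeavyPendants

/-- Consider a 5-cycle with vertices `u, v, x, y, z` in cyclic order (here the cycle vertices
`0, 1, 2, 3, 4` of `pufferGraph 5 p`), with at least 2 pendant edges at every cycle vertex and
with the edge `uv` maximizing the degree sum over edges of the cycle. If
`d(u) + d(v) ≥ d(x) + d(y) + d(z) - 3` then the strong chromatic index equals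
`d(u) + d(v) - 1`. -/
theorem sci_C5_heavy_pendants_eq (p : Fin 5 → ℕ) (hp : ∀ i, 2 ≤ p i)
    (hmax : ∀ i : Fin 5,
      sdeg (pufferGraph 5 p) (Sum.inl i) + sdeg (pufferGraph 5 p) (Sum.inl (i + 1)) ≤
        sdeg (pufferGraph 5 p) (Sum.inl 0) + sdeg (pufferGraph 5 p) (Sum.inl 1))
    (h : sdeg (pufferGraph 5 p) (Sum.inl 2) + sdeg (pufferGraph 5 p) (Sum.inl 3) +
          sdeg (pufferGraph 5 p) (Sum.inl 4) - 3 ≤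
        sdeg (pufferGraph 5 p) (Sum.inl 0) + sdeg (pufferGraph 5 p) (Sum.inl 1)) :
    sci (pufferGraph 5 p) =
      sdeg (pufferGraph 5 p) (Sum.inl 0) + sdeg (pufferGraph 5 p) (Sum.inl 1) - 1 := by
  have hdeg : ∀ i, sdeg (pufferGraph 5 p) (.inl i) = p i + 2 := pufferGraph.sdeg_inl (n := 2) p
  have hP : HeavyPendants p := by
    have h12 := hmax 1
    have h40 := hmax 4
    simp only [hdeg, Fin.reduceAdd] at h12 h40 h
    exact ⟨hp, by omega, by omega, by omega⟩
  rw [hdeg, hdeg, show p 0 + 2 + (p 1 + 2) - 1 = p 0 + p 1 + 3 by omega]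
  refine sci_eq_of_isStrongEdgeColoring hP.isStrongEdgeColoring_pufferColoring fun m c hc => ?_
  have h01 : (pufferGraph 5 p).Adj (.inl 0) (.inl 1) := pufferGraph.adj_inl_inl.mpr (by decide)
  have := hc.sdeg_add_sdeg_sub_one_le h01
  rw [hdeg, hdeg] at this
  omega
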